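/- arXiv:math/0604603 — 3 statements merged into one kernel-verified Lean document; each statement's English description precedes it below -/
import Mathlib

section
/- Let F_q be a finite field, θ an automorphism of F_q, and n a positive integer divisible by the order of θ. Then the quotient ring F_q[X;θ]/(X^n − 1) is a principal left ideal ring: every left ideal of F_q[X;θ]/(X^n − 1) is generated by ψ(G), where G ∈ F_q[X;θ] is a right divisor of X^n − 1 in F_q[X;θ] and ψ: F_q[X;θ] → F_q[X;θ]/(X^n − 1) is the canonical projection. -/
/-!
Skew polynomial rings `F[X;θ]` of automorphism type: the additive group of
polynomials `∑ aᵢ Xⁱ` with coefficients written on the left, with multiplication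
determined by the rule `X * a = θ(a) * X`.
-/

noncomputable section

/-- The skew polynomial ring `F[X;θ]`: formal polynomials `∑ aᵢ Xⁱ` (represented by
their finitely supported coefficient functions) with the usual addition and with
multiplication twisted by the automorphism `θ`, so that `X * a = θ(a) * X`. -/
def SkewPoly (F : Type*) [Ring F] (_θ : RingAut F) : Type _ := ℕ →₀ F

namespace SkewPoly

variable {F : Type*} [Ring F] (θ : RingAut F)

instance : AddCommGroup (SkewPoly F θ) := inferInstanceAs (AddCommGroup (ℕ →₀ F))

private theorem aut_one_apply (x : F) : (1 : RingAut F) x = x := rfl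
private theorem aut_mul_apply (f g : RingAut F) (x : F) : (f * g) x = f (g x) := rfl

/-- The skew (twisted) convolution product on coefficient functions:
`(∑ aᵢ Xⁱ) * (∑ bⱼ Xʲ) = ∑_{i,j} aᵢ θⁱ(bⱼ) X^{i+j}`. -/
def mulF (p q : ℕ →₀ F) : ℕ →₀ F :=
  p.sum fun i a => q.sum fun j b => Finsupp.single (i + j) (a * (θ ^ i) b)

instance : Mul (SkewPoly F θ) := ⟨fun p q => mulF θ p q⟩

instance : One (SkewPoly F θ) := ⟨(Finsupp.single 0 1 : ℕ →₀ F)⟩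

theorem mul_def (p q : SkewPoly F θ) :
    p * q = Finsupp.sum (α := ℕ) (M := F) p
      (fun i a => Finsupp.sum (α := ℕ) (M := F) q
        (fun j b => Finsupp.single (i + j) (a * (θ ^ i) b))) := rfl

private theorem zero_mulF (q : ℕ →₀ F) : mulF θ 0 q = 0 := by
  simp [mulF]

private theorem mulF_zero (p : ℕ →₀ F) : mulF θ p 0 = 0 := by
  simp [mulF]

private theorem add_mulF (p p' q : ℕ →₀ F) :
    mulF θ (p + p') q = mulF θ p q + mulF θ p' q := by
  unfold mulF
  rw [Finsupp.sum_add_index] <;> simp [add_mul, Finsupp.sum_add]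

private theorem mulF_add (p q q' : ℕ →₀ F) :
    mulF θ p (q + q') = mulF θ p q + mulF θ p q' := by
  unfold mulF
  rw [← Finsupp.sum_add]
  refine Finsupp.sum_congr fun i _ => ?_
  rw [Finsupp.sum_add_index] <;> simp [mul_add]

private theorem single_mulF (i : ℕ) (a : F) (q : ℕ →₀ F) :
    mulF θ (Finsupp.single i a) q
      = q.sum fun j b => Finsupp.single (i + j) (a * (θ ^ i) b) := by
  unfold mulF
  rw [Finsupp.sum_single_index]
  simp

private theorem single_mulF_single (i j : ℕ) (a b : F) :
    mulF θ (Finsupp.single i a) (Finsupp.single j b)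
      = Finsupp.single (i + j) (a * (θ ^ i) b) := by
  rw [single_mulF, Finsupp.sum_single_index]
  simp

private theorem mulF_assoc_sss (i j k : ℕ) (a b c : F) :
    mulF θ (mulF θ (Finsupp.single i a) (Finsupp.single j b)) (Finsupp.single k c)
      = mulF θ (Finsupp.single i a) (mulF θ (Finsupp.single j b) (Finsupp.single k c)) := by
  simp only [single_mulF_single]
  rw [add_assoc, pow_add]
  simp [mul_assoc, aut_mul_apply]

private theorem mulF_assoc_ss (i j : ℕ) (a b : F) (r : ℕ →₀ F) :
    mulF θ (mulF θ (Finsupp.single i a) (Finsupp.single j b)) r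
      = mulF θ (Finsupp.single i a) (mulF θ (Finsupp.single j b) r) := by
  induction r using Finsupp.induction with
  | zero => simp [mulF_zero]
  | single_add k c r _ _ ih =>
      rw [mulF_add, mulF_add, mulF_add, ih, mulF_assoc_sss]

private theorem mulF_assoc_s (i : ℕ) (a : F) (q r : ℕ →₀ F) :
    mulF θ (mulF θ (Finsupp.single i a) q) r
      = mulF θ (Finsupp.single i a) (mulF θ q r) := by
  induction q using Finsupp.induction with
  | zero => simp [mulF_zero, zero_mulF]
  | single_add j b q _ _ ih =>
      rw [mulF_add, add_mulF, add_mulF, mulF_add, ih, mulF_assoc_ss]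

private theorem mulF_assoc (p q r : ℕ →₀ F) :
    mulF θ (mulF θ p q) r = mulF θ p (mulF θ q r) := by
  induction p using Finsupp.induction with
  | zero => simp [zero_mulF]
  | single_add i a p _ _ ih =>
      rw [add_mulF, add_mulF, add_mulF, ih, mulF_assoc_s]

instance instRing : Ring (SkewPoly F θ) :=
  { (inferInstance : AddCommGroup (ℕ →₀ F)),
    (inferInstance : Mul (SkewPoly F θ)),
    (inferInstance : One (SkewPoly F θ)) with
    mul_assoc := fun p q r => mulF_assoc θ p q r
    one_mul := fun p => by
      show mulF θ (Finsupp.single 0 1) p = p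
      erw [single_mulF]
      refine (Finsupp.sum_congr fun i a => ?_).trans (Finsupp.sum_single p)
      simp [aut_one_apply]
    mul_one := fun p => by
      show mulF θ p (Finsupp.single 0 1) = p
      unfold mulF
      refine (Finsupp.sum_congr fun i a => ?_).trans (Finsupp.sum_single p)
      rw [Finsupp.sum_single_index] <;> simp
    left_distrib := fun p q r => mulF_add θ p q r
    right_distrib := fun p q r => add_mulF θ p q r
    zero_mul := fun p => zero_mulF θ p
    mul_zero := fun p => mulF_zero θ p }

/-- The constant (degree-zero) embedding `F → F[X;θ]`, as a ring homomorphism. -/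
def C : F →+* SkewPoly F θ where
  toFun a := (Finsupp.single 0 a : ℕ →₀ F)
  map_one' := rfl
  map_mul' a b := by
    show _ = mulF θ _ _
    rw [single_mulF_single]
    simp [aut_one_apply]
  map_zero' := by
    show (Finsupp.single 0 (0 : F) : ℕ →₀ F) = 0
    simp
  map_add' a b := by
    show (Finsupp.single 0 (a + b) : ℕ →₀ F) = Finsupp.single 0 a + Finsupp.single 0 b
    exact Finsupp.single_add 0 a b

/-- The indeterminate `X` of the skew polynomial ring. -/
def X : SkewPoly F θ := (Finsupp.single 1 1 : ℕ →₀ F)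

/-- The `i`-th coefficient of a skew polynomial. -/
def coeff (p : SkewPoly F θ) (i : ℕ) : F := (show ℕ →₀ F from p) i

/-- Sanity check: the fundamental commutation rule `X * a = θ(a) * X`. -/
theorem X_mul_C (a : F) : X θ * C θ a = C θ (θ a) * X θ := by
  show mulF θ (Finsupp.single 1 1) (Finsupp.single 0 a)
      = mulF θ (Finsupp.single 0 (θ a)) (Finsupp.single 1 1)
  rw [single_mulF_single, single_mulF_single]
  simp [aut_one_apply, pow_one]

end SkewPoly

/-- The congruence on `F[X;θ]` identifying two skew polynomials iff they differ by an
element of the two-sided ideal generated by `Xⁿ - 1`; its quotient ring is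
`F[X;θ]/(Xⁿ - 1)`, and `(skewCyclicCon F θ n).mk'` is the canonical projection `ψ`. -/
def skewCyclicCon (F : Type*) [Ring F] (θ : RingAut F) (n : ℕ) :
    RingCon (SkewPoly F θ) :=
  (TwoSidedIdeal.span {SkewPoly.X θ ^ n - 1}).ringCon

namespace SkewPoly

variable {F : Type*} [Field F] {θ : RingAut F}

/-- The monomial `c Xᵈ`. -/
def monomial (θ : RingAut F) (d : ℕ) (c : F) : SkewPoly F θ := Finsupp.single d c

/-- Degree of a skew polynomial (zero polynomial has degree `0`). -/
def deg (p : SkewPoly F θ) : ℕ := WithBot.unbotD 0 ((show ℕ →₀ F from p).support.max)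

theorem ext_coeff {p q : SkewPoly F θ} (h : ∀ k, coeff θ p k = coeff θ q k) : p = q :=
  Finsupp.ext h

theorem coeff_sub (p q : SkewPoly F θ) (k : ℕ) :
    coeff θ (p - q) k = coeff θ p k - coeff θ q k :=
  Finsupp.sub_apply _ _ _

theorem le_deg {p : SkewPoly F θ} {k : ℕ} (h : coeff θ p k ≠ 0) : k ≤ deg p := by
  have hk : k ∈ (show ℕ →₀ F from p).support := Finsupp.mem_support_iff.mpr h
  have hle := Finset.le_max hk
  unfold deg
  cases hmax : (show ℕ →₀ F from p).support.max with
  | bot => rw [hmax] at hle; exact absurd hle (by simp)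
  | coe m => rw [hmax] at hle; simpa using hle

theorem coeff_deg_ne_zero {p : SkewPoly F θ} (h : p ≠ 0) : coeff θ p (deg p) ≠ 0 := by
  have hne : (show ℕ →₀ F from p).support.Nonempty :=
    Finsupp.support_nonempty_iff.mpr h
  have hdeg : deg p = (show ℕ →₀ F from p).support.max' hne := by
    unfold deg; rw [← Finset.coe_max' hne]; rfl
  rw [hdeg]
  exact Finsupp.mem_support_iff.mp (Finset.max'_mem _ _)

theorem eq_zero_or_deg_lt {p : SkewPoly F θ} {m : ℕ}
    (h : ∀ k, m ≤ k → coeff θ p k = 0) : p = 0 ∨ deg p < m := by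
  by_cases hp : p = 0
  · exact Or.inl hp
  · right
    by_contra h'
    exact coeff_deg_ne_zero hp (h _ (not_lt.mp h'))

theorem coeff_monomial (d : ℕ) (c : F) (k : ℕ) :
    coeff θ (monomial θ d c) k = if d = k then c else 0 :=
  Finsupp.single_apply

theorem coeff_monomial_mul (d : ℕ) (c : F) (g : SkewPoly F θ) (k : ℕ) :
    coeff θ (monomial θ d c * g) k
      = if d ≤ k then c * (θ ^ d) (coeff θ g (k - d)) else 0 := by
  classical
  show (mulF θ (Finsupp.single d c) (show ℕ →₀ F from g)) k = _
  rw [single_mulF, Finsupp.sum_apply]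
  unfold Finsupp.sum
  simp only [Finsupp.single_apply]
  by_cases hd : d ≤ k
  · rw [if_pos hd]
    rw [Finset.sum_eq_single (k - d) (fun j _ hj => if_neg (by omega))
      (fun hb => by
        rw [if_pos (by omega), Finsupp.notMem_support_iff.mp hb, map_zero, mul_zero])]
    rw [if_pos (by omega)]
    rfl
  · rw [if_neg hd]
    exact Finset.sum_eq_zero fun j _ => if_neg (by omega)

theorem exists_division (g : SkewPoly F θ) (hg : g ≠ 0) (p : SkewPoly F θ) :
    ∃ q r : SkewPoly F θ, p = q * g + r ∧ (r = 0 ∨ deg r < deg g) := by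
  classical
  suffices H : ∀ N : ℕ, ∀ p : SkewPoly F θ, deg p < N →
      ∃ q r : SkewPoly F θ, p = q * g + r ∧ (r = 0 ∨ deg r < deg g) from
    H (deg p + 1) p (Nat.lt_succ_self _)
  intro N
  induction N with
  | zero => exact fun p hp => absurd hp (by omega)
  | succ N ih =>
    intro p hp
    by_cases hp0 : p = 0
    · exact ⟨0, 0, by simp [hp0], Or.inl rfl⟩
    by_cases hlt : deg p < deg g
    · exact ⟨0, p, by simp, Or.inr hlt⟩
    push_neg at hlt
    set d := deg p - deg g with hd
    have hdg : d + deg g = deg p := by omega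
    have hlg : (θ ^ d) (coeff θ g (deg g)) ≠ 0 := by
      intro h
      apply coeff_deg_ne_zero hg
      have := congrArg (θ ^ d).symm h
      rwa [RingEquiv.symm_apply_apply, map_zero] at this
    set c := coeff θ p (deg p) * ((θ ^ d) (coeff θ g (deg g)))⁻¹ with hc
    set p' := p - monomial θ d c * g with hp'
    have hkey : ∀ k, deg p ≤ k → coeff θ p' k = 0 := by
      intro k hk
      rw [hp', coeff_sub, coeff_monomial_mul]
      rcases eq_or_lt_of_le hk with heq | hlt2
      · subst heq
        rw [if_pos (by omega), show deg p - d = deg g from by omega, hc,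
          mul_assoc, inv_mul_cancel₀ hlg, mul_one, sub_self]
      · have h1 : coeff θ p k = 0 := by
          by_contra h; exact absurd (le_deg h) (by omega)
        have h2 : coeff θ g (k - d) = 0 := by
          by_contra h; exact absurd (le_deg h) (by omega)
        rw [h1, if_pos (by omega), h2, map_zero, mul_zero, sub_zero]
    rcases eq_zero_or_deg_lt hkey with h0 | hdlt
    · refine ⟨monomial θ d c, 0, ?_, Or.inl rfl⟩
      rw [add_zero]
      exact sub_eq_zero.mp h0
    · obtain ⟨q, r, hqr, hr⟩ := ih p' (by omega)
      refine ⟨q + monomial θ d c, r, ?_, hr⟩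
      have hpp : p = p' + monomial θ d c * g := by rw [hp']; abel
      rw [hpp, hqr, add_mul]
      abel

theorem X_pow (θ : RingAut F) (n : ℕ) : (X θ) ^ n = monomial θ n 1 := by
  induction n with
  | zero => rfl
  | succ n ih =>
    rw [pow_succ, ih]
    show mulF θ (Finsupp.single n 1) (Finsupp.single 1 1) = _
    rw [single_mulF_single, map_one, mul_one]
    rfl

theorem X_pow_sub_one_ne_zero (θ : RingAut F) {n : ℕ} (hn : 0 < n) :
    (X θ) ^ n - 1 ≠ 0 := by
  intro h
  have := congrArg (fun p : SkewPoly F θ => coeff θ p n) h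
  simp only [coeff_sub, X_pow] at this
  rw [show (1 : SkewPoly F θ) = monomial θ 0 1 from rfl] at this
  rw [coeff_monomial, coeff_monomial, if_pos rfl, if_neg (by omega)] at this
  simp at this
  exact one_ne_zero this

end SkewPoly

/-- If the order of `θ` divides `n`, then `F[X;θ]/(Xⁿ - 1)` is a
principal left ideal ring: every left ideal is generated by `ψ(G)` for some right
divisor `G` of `Xⁿ - 1` in `F[X;θ]`, where `ψ` is the canonical projection. -/
theorem quotient_is_principal_left_ideal_ring
    (F : Type*) [Field F] [Fintype F] (θ : RingAut F) (n : ℕ) (hn : 0 < n)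
    (hord : orderOf θ ∣ n) (I : Ideal (skewCyclicCon F θ n).Quotient) :
    ∃ G : SkewPoly F θ,
      (∃ Q : SkewPoly F θ, SkewPoly.X θ ^ n - 1 = Q * G) ∧
      I = Ideal.span {(skewCyclicCon F θ n).mk' G} := by
  classical
  set ψ : SkewPoly F θ →+* (skewCyclicCon F θ n).Quotient := (skewCyclicCon F θ n).mk'
  have hψsurj : Function.Surjective ψ := Quotient.mk''_surjective
  set J : Ideal (SkewPoly F θ) := I.comap ψ with hJdef
  -- `Xⁿ - 1` maps to zero, hence lies in `J`
  have hψXn : ψ (SkewPoly.X θ ^ n - 1) = 0 := by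
    have h0 : ψ (0 : SkewPoly F θ) = 0 := map_zero ψ
    rw [← h0]
    show ((SkewPoly.X θ ^ n - 1 : SkewPoly F θ) : (skewCyclicCon F θ n).Quotient)
        = ((0 : SkewPoly F θ) : (skewCyclicCon F θ n).Quotient)
    rw [RingCon.eq]
    exact (TwoSidedIdeal.rel_iff _ _ _).mpr
      (by have h := TwoSidedIdeal.subset_span (R := SkewPoly F θ) (s := {SkewPoly.X θ ^ n - 1}) (Set.mem_singleton _); rw [SetLike.mem_coe] at h; convert h using 1; exact sub_zero (SkewPoly.X θ ^ n - 1 : SkewPoly F θ))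
  have hXnJ : SkewPoly.X θ ^ n - 1 ∈ J := by
    show ψ _ ∈ I
    rw [hψXn]; exact I.zero_mem
  have hXn0 : SkewPoly.X θ ^ n - 1 ≠ 0 := SkewPoly.X_pow_sub_one_ne_zero θ hn
  -- pick a nonzero element of minimal degree in `J`
  set S : Set ℕ := {k | ∃ p ∈ J, p ≠ 0 ∧ SkewPoly.deg p = k} with hS
  have hSne : S.Nonempty := ⟨_, SkewPoly.X θ ^ n - 1, hXnJ, hXn0, rfl⟩
  obtain ⟨G, hGJ, hG0, hGdeg⟩ := Nat.sInf_mem hSne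
  have hmin : ∀ p ∈ J, p ≠ 0 → SkewPoly.deg G ≤ SkewPoly.deg p := by
    intro p hpJ hp0
    rw [hGdeg]
    exact Nat.sInf_le ⟨p, hpJ, hp0, rfl⟩
  -- every element of `J` is a left multiple of `G`
  have hJG : ∀ p ∈ J, ∃ q : SkewPoly F θ, p = q * G := by
    intro p hpJ
    obtain ⟨q, r, hqr, hr⟩ := SkewPoly.exists_division G hG0 p
    have hqGJ : q * G ∈ J := by
      have := J.smul_mem q hGJ
      rwa [smul_eq_mul] at this
    have hrJ : r ∈ J := by
      have : r = p - q * G := by rw [hqr]; abel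
      rw [this]
      exact J.sub_mem hpJ hqGJ
    have hr0 : r = 0 := by
      rcases hr with hr0 | hrlt
      · exact hr0
      · by_contra hne
        exact absurd (hmin r hrJ hne) (by omega)
    exact ⟨q, by rw [hqr, hr0, add_zero]⟩
  obtain ⟨Q, hQ⟩ := hJG _ hXnJ
  refine ⟨G, ⟨Q, hQ⟩, ?_⟩
  apply le_antisymm
  · intro x hx
    obtain ⟨p, rfl⟩ := hψsurj x
    have hpJ : p ∈ J := hx
    obtain ⟨q, rfl⟩ := hJG p hpJ
    rw [map_mul]
    exact Ideal.mem_span_singleton'.mpr ⟨ψ q, rfl⟩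
  · rw [Ideal.span_le, Set.singleton_subset_iff]
    exact hGJ
end
end

section
/- Let α be an element of order 2^n − 1 in F_{2^n}, set α_j = α^{2^j − 1} for j = 0, ..., n−1, and let 2 ≤ d ≤ n+1. Consider the (d−1) × n matrix H₁ over F_{2^n} whose (i, j) entry is α_j^i for 1 ≤ i ≤ d−1 and 0 ≤ j ≤ n−1. Then any d−1 columns of H₁ are linearly independent; equivalently, every (d−1) × (d−1) submatrix of H₁ obtained by selecting d−1 columns has nonzero determinant. -/
/-- Let `α` have order `2ⁿ - 1` in the field with `2ⁿ` elements, let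
`αⱼ = α^{2ʲ-1}` and `2 ≤ d ≤ n + 1`, and let `H₁` be the `(d-1) × n` matrix with
entries `(H₁)_{i,j} = αⱼ ^ i` for `1 ≤ i ≤ d-1`, `0 ≤ j ≤ n-1`.  Then any `d - 1`
columns of `H₁` are linearly independent; equivalently every `(d-1) × (d-1)` submatrix
obtained by selecting `d - 1` (distinct) columns has nonzero determinant. -/
theorem any_d_sub_one_columns_independent
    (F : Type*) [Field F] [Fintype F] (n d : ℕ) (hd2 : 2 ≤ d) (hdn : d ≤ n + 1)
    (hcard : Fintype.card F = 2 ^ n) (α : F) (hα : orderOf α = 2 ^ n - 1)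
    (c : Fin (d - 1) → Fin n) (hc : Function.Injective c) :
    LinearIndependent F
      (fun k : Fin (d - 1) => fun i : Fin (d - 1) =>
        (α ^ (2 ^ ((c k : ℕ)) - 1)) ^ ((i : ℕ) + 1)) ∧
    (Matrix.of fun i k : Fin (d - 1) =>
        (α ^ (2 ^ ((c k : ℕ)) - 1)) ^ ((i : ℕ) + 1)).det ≠ 0 := by
  have hn1 : 1 ≤ n := by omega
  have h2n : 2 ≤ 2 ^ n := by
    calc 2 = 2 ^ 1 := (pow_one 2).symm
    _ ≤ 2 ^ n := Nat.pow_le_pow_right (by norm_num) hn1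
  have hord : 0 < orderOf α := by omega
  have hα0 : α ≠ 0 := by
    intro h
    rw [h] at hα
    have h1 := pow_orderOf_eq_one (0 : F)
    rw [hα, zero_pow (by omega : 2 ^ n - 1 ≠ 0)] at h1
    exact zero_ne_one h1
  set x : Fin (d - 1) → F := fun k => α ^ (2 ^ ((c k : ℕ)) - 1) with hx
  have hx0 : ∀ k, x k ≠ 0 := fun k => pow_ne_zero _ hα0
  have hxinj : Function.Injective x := by
    have key : ∀ a b : ℕ, a ≤ b → b < orderOf α → α ^ a = α ^ b → a = b := by
      intro a b hab hb h
      by_contra hne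
      have h2 : α ^ (b - a) = 1 := by
        apply mul_left_cancel₀ (pow_ne_zero a hα0)
        rw [mul_one, ← pow_add, Nat.add_sub_cancel' hab, h]
      have hdvd := orderOf_dvd_of_pow_eq_one h2
      have := Nat.le_of_dvd (by omega) hdvd
      omega
    intro k l h
    have hlt : ∀ k : Fin (d-1), 2 ^ ((c k : ℕ)) - 1 < orderOf α := by
      intro k
      rw [hα]
      have h1 : (c k : ℕ) < n := (c k).isLt
      have : 2 ^ ((c k : ℕ)) < 2 ^ n := Nat.pow_lt_pow_right (by norm_num) h1
      have h2 : 1 ≤ 2 ^ ((c k : ℕ)) := Nat.one_le_two_pow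
      omega
    have hexp : 2 ^ ((c k : ℕ)) - 1 = 2 ^ ((c l : ℕ)) - 1 := by
      rcases le_total (2 ^ ((c k : ℕ)) - 1) (2 ^ ((c l : ℕ)) - 1) with hle | hle
      · exact key _ _ hle (hlt l) h
      · exact (key _ _ hle (hlt k) h.symm).symm
    have h2 : 1 ≤ 2 ^ ((c k : ℕ)) := Nat.one_le_two_pow
    have h3 : 1 ≤ 2 ^ ((c l : ℕ)) := Nat.one_le_two_pow
    have h4 : (2:ℕ) ^ ((c k : ℕ)) = 2 ^ ((c l : ℕ)) := by omega
    exact hc (Fin.ext (Nat.pow_right_injective (le_refl 2) h4))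
  have hdet : (Matrix.of fun i k : Fin (d - 1) => x k ^ ((i : ℕ) + 1)).det ≠ 0 := by
    have heq : (Matrix.of fun i k : Fin (d - 1) => x k ^ ((i : ℕ) + 1)) =
        (Matrix.diagonal x * Matrix.vandermonde x).transpose := by
      ext i k
      simp [Matrix.transpose_apply, Matrix.diagonal_mul, Matrix.vandermonde_apply,
        pow_succ, mul_comm]
    rw [heq, Matrix.det_transpose, Matrix.det_mul, Matrix.det_vandermonde,
      Matrix.det_diagonal]
    apply mul_ne_zero
    · exact Finset.prod_ne_zero_iff.mpr fun k _ => hx0 k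
    · apply Finset.prod_ne_zero_iff.mpr
      intro i _
      apply Finset.prod_ne_zero_iff.mpr
      intro j hj
      rw [Finset.mem_Ioi] at hj
      exact sub_ne_zero_of_ne fun h => hj.ne' (hxinj h)
  have hu : IsUnit (Matrix.of fun k i : Fin (d - 1) => x k ^ ((i : ℕ) + 1)) := by
    rw [Matrix.isUnit_iff_isUnit_det, isUnit_iff_ne_zero]
    have h5 : (Matrix.of fun k i : Fin (d - 1) => x k ^ ((i : ℕ) + 1)).det
        = (Matrix.of fun i k : Fin (d - 1) => x k ^ ((i : ℕ) + 1)).det := by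
      rw [← Matrix.det_transpose]
      rfl
    rw [h5]; exact hdet
  exact ⟨Matrix.linearIndependent_rows_iff_isUnit.mpr hu, hdet⟩
end

section
/- Let F be a field, let β₁, ..., β_r ∈ F be nonzero elements, and let e₁, ..., e_r ∈ F. Define the formal power series S(z) = Σ_{k=1}^∞ (Σ_{l=1}^r e_l β_l^k) z^{k−1} ∈ F[[z]], the locator polynomial σ(z) = ∏_{k=1}^r (1 − β_k z), and the evaluator polynomial w(z) = Σ_{l=1}^r e_l β_l ∏_{k≠l} (1 − β_k z). Then the key equation σ(z) · S(z) = w(z) holds in the formal power series ring F[[z]]. -/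
open PowerSeries

lemma geom_inv (F : Type*) [Field F] (a : F) :
    (1 - PowerSeries.C a * PowerSeries.X) * PowerSeries.mk (fun n => a ^ n) = 1 := by
  ext n
  rw [sub_mul, one_mul, map_sub, mul_assoc, PowerSeries.coeff_C_mul]
  cases n with
  | zero => simp
  | succ m =>
      rw [PowerSeries.coeff_succ_X_mul, PowerSeries.coeff_mk, PowerSeries.coeff_mk]
      simp [pow_succ, mul_comm]

/-- (Key equation.)  For nonzero `β₁, …, β_r ∈ F` and
`e₁, …, e_r ∈ F`, with syndrome series `S(z) = ∑_{k ≥ 1} (∑_l e_l β_l^k) z^{k-1}`,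
locator polynomial `σ(z) = ∏_k (1 - β_k z)` and evaluator polynomial
`w(z) = ∑_l e_l β_l ∏_{k ≠ l} (1 - β_k z)`, the key equation `σ(z)·S(z) = w(z)`
holds in the formal power series ring `F[[z]]`. -/
theorem key_equation
    (F : Type*) [Field F] (r : ℕ) (β : Fin r → F) (hβ0 : ∀ l, β l ≠ 0)
    (e : Fin r → F) :
    (∏ k : Fin r, (1 - PowerSeries.C (β k) * PowerSeries.X)) *
        PowerSeries.mk (fun k : ℕ => ∑ l : Fin r, e l * β l ^ (k + 1))
      = ∑ l : Fin r, PowerSeries.C (e l * β l) *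
          ∏ k ∈ Finset.univ.erase l, (1 - PowerSeries.C (β k) * PowerSeries.X) := by
  have hS : PowerSeries.mk (fun k : ℕ => ∑ l : Fin r, e l * β l ^ (k + 1))
      = ∑ l : Fin r, PowerSeries.C (e l * β l) * PowerSeries.mk (fun n => β l ^ n) := by
    ext n
    simp only [map_sum, PowerSeries.coeff_C_mul, PowerSeries.coeff_mk]
    exact Finset.sum_congr rfl fun l _ => by ring
  rw [hS, Finset.mul_sum]
  refine Finset.sum_congr rfl fun l _ => ?_
  rw [← Finset.mul_prod_erase Finset.univ _ (Finset.mem_univ l)]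
  calc (1 - PowerSeries.C (β l) * PowerSeries.X) *
        (∏ k ∈ Finset.univ.erase l, (1 - PowerSeries.C (β k) * PowerSeries.X)) *
        (PowerSeries.C (e l * β l) * PowerSeries.mk (fun n => β l ^ n))
      = PowerSeries.C (e l * β l) *
        ((1 - PowerSeries.C (β l) * PowerSeries.X) * PowerSeries.mk (fun n => β l ^ n)) *
        (∏ k ∈ Finset.univ.erase l, (1 - PowerSeries.C (β k) * PowerSeries.X)) := by ring
    _ = _ := by rw [geom_inv]; ring
end
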